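/- Let F be a field and let S, P be disjoint finite sets with pairwise disjoint copies S′, S″, P′, P″. Let V₁, V̂₁ ⊆ F_{S′∪P′∪S″∪P″} be Dirac duals of each other with respect to the copies S′∪P′ and S″∪P″, and let V₂, V̂₂ ⊆ F_{S′∪S″} be Dirac duals of each other with respect to the copies S′ and S″. Then the matched compositions V₁ ↔ V₂ and V̂₁ ↔ V̂₂ (over the shared index set S′∪S″, subspaces of F_{P′∪P″}) are Dirac duals of each other with respect to the copies P′ and P″. In particular, if V₁ and V₂ are Dirac (self-Dirac-dual), then so is V₁ ↔ V₂. -/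

import Mathlib

noncomputable section

open scoped BigOperators

/-- Dot product of two vectors indexed by a finite type. -/
def dotProd {F X : Type*} [Field F] [Fintype X] (f g : X → F) : F :=
  ∑ x, f x * g x

/-- Dot product on `F_{S∪P}` (encoded as pairs). -/
def dotM {F S P : Type*} [Field F] [Fintype S] [Fintype P]
    (x y : (S → F) × (P → F)) : F :=
  dotProd x.1 y.1 + dotProd x.2 y.2

/-- Orthogonal complement of a collection on `X′∪X″` (two copies of `X`). -/
def perpFun2 {F X : Type*} [Field F] [Fintype X]
    (K : Set ((X → F) × (X → F))) : Set ((X → F) × (X → F)) :=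
  {y | ∀ x ∈ K, dotProd x.1 y.1 + dotProd x.2 y.2 = 0}

/-- Dirac dual of a collection on `X′∪X″`: `{(a,b) : (b,a) ∈ V^⊥}`. -/
def diracFun {F X : Type*} [Field F] [Fintype X]
    (V : Set ((X → F) × (X → F))) : Set ((X → F) × (X → F)) :=
  {z | (z.2, z.1) ∈ perpFun2 V}

/-- Orthogonal complement of a collection on `(S′∪P′)∪(S″∪P″)`. -/
def perpM2 {F S P : Type*} [Field F] [Fintype S] [Fintype P]
    (K : Set (((S → F) × (P → F)) × ((S → F) × (P → F)))) :
    Set (((S → F) × (P → F)) × ((S → F) × (P → F))) :=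
  {y | ∀ x ∈ K, dotM x.1 y.1 + dotM x.2 y.2 = 0}

/-- Dirac dual of a collection on `(S′∪P′)∪(S″∪P″)` w.r.t. the copies
`S′∪P′` and `S″∪P″`. -/
def diracM {F S P : Type*} [Field F] [Fintype S] [Fintype P]
    (V : Set (((S → F) × (P → F)) × ((S → F) × (P → F)))) :
    Set (((S → F) × (P → F)) × ((S → F) × (P → F))) :=
  {z | (z.2, z.1) ∈ perpM2 V}

/-- Matched composition of `V₁ ⊆ F_{S′∪P′∪S″∪P″}` with `V₂ ⊆ F_{S′∪S″}`
over the shared index set `S′∪S″`; a subset of `F_{P′∪P″}`. -/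
def portComp {F S P : Type*} [Field F]
    (V₁ : Set (((S → F) × (P → F)) × ((S → F) × (P → F))))
    (V₂ : Set ((S → F) × (S → F))) : Set ((P → F) × (P → F)) :=
  {z | ∃ f₁ f₂ : S → F, ((f₁, z.1), (f₂, z.2)) ∈ V₁ ∧ (f₁, f₂) ∈ V₂}

/-! The Dirac dual is the orthogonal complement for the symmetric nondegenerate form
`⟪(a, b), (c, d)⟫ = a ⬝ᵥ d + b ⬝ᵥ c`. After regrouping coordinates, this form on
`(S′∪P′)∪(S″∪P″)` is the orthogonal sum of the forms on `S′∪S″` and on `P′∪P″`, and `V₁ ↔ V₂` is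
the projection to the `P`-part of `V₁ ∩ (V₂ × ⊤)`. The orthogonal of a projection is the slice
`{z | (0, z) ∈ ·}` of the orthogonal, and in finite dimension
`(V₁ ∩ (V₂ × ⊤))^⊥ = V₁^⊥ + V₂^⊥ × 0`, whose slice is exactly the projection of
`V₁^⊥ ∩ (V₂^⊥ × ⊤)`, i.e. `V₁^⊥ ↔ V₂^⊥`. -/

open LinearMap (BilinForm snd)

lemma Submodule.comap_inr_sup_prod_bot {R M N : Type*} [CommRing R] [AddCommGroup M] [Module R M]
    [AddCommGroup N] [Module R N] (W : Submodule R (M × N)) (U : Submodule R M) :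
    (W ⊔ U.prod ⊥).comap (LinearMap.inr R M N)
      = (W ⊓ U.prod ⊤).map (LinearMap.snd R M N) := by
  ext z
  simp only [mem_comap, mem_map, mem_inf, mem_prod, mem_top, and_true, LinearMap.snd_apply,
    LinearMap.inr_apply]
  constructor
  · intro hz
    obtain ⟨w, hw, u, ⟨hu, hu₂⟩, hwu⟩ := mem_sup.1 hz
    replace hu₂ : u.2 = 0 := (mem_bot R).1 hu₂
    refine ⟨w, ⟨hw, ?_⟩, by simpa [hu₂] using congrArg Prod.snd hwu⟩
    rw [eq_neg_of_add_eq_zero_left (congrArg Prod.fst hwu)]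
    exact U.neg_mem hu
  · rintro ⟨w, ⟨hw, hw₁⟩, rfl⟩
    refine mem_sup.2 ⟨w, hw, (-w.1, 0), ⟨U.neg_mem hw₁, (mem_bot R).2 rfl⟩, ?_⟩
    ext <;> simp

namespace LinearMap.BilinForm

section Prod

variable {R M N : Type*} [CommRing R] [AddCommGroup M] [Module R M] [AddCommGroup N] [Module R N]
  (B₁ : BilinForm R M) (B₂ : BilinForm R N)

def prod : BilinForm R (M × N) :=
  B₁.compl₁₂ (fst R M N) (fst R M N) + B₂.compl₁₂ (snd R M N) (snd R M N)

@[simp]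
lemma prod_apply (x y : M × N) : B₁.prod B₂ x y = B₁ x.1 y.1 + B₂ x.2 y.2 := rfl

variable {B₁ B₂}

lemma IsSymm.prod (h₁ : B₁.IsSymm) (h₂ : B₂.IsSymm) : (B₁.prod B₂).IsSymm :=
  ⟨fun x y => by simp only [prod_apply, h₁.eq x.1, h₂.eq x.2]⟩

lemma Nondegenerate.prod (h₁ : B₁.Nondegenerate) (h₂ : B₂.Nondegenerate) :
    (B₁.prod B₂).Nondegenerate :=
  ⟨fun x hx => Prod.ext (h₁.1 _ fun y => by simpa using hx (y, 0))
      (h₂.1 _ fun y => by simpa using hx (0, y)),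
    fun y hy => Prod.ext (h₁.2 _ fun x => by simpa using hy (x, 0))
      (h₂.2 _ fun x => by simpa using hy (0, x))⟩

variable (B₁ B₂)

lemma orthogonal_prod (U : Submodule R M) (W : Submodule R N) :
    (B₁.prod B₂).orthogonal (U.prod W) = (B₁.orthogonal U).prod (B₂.orthogonal W) := by
  ext y
  simp only [mem_orthogonal_iff, Submodule.mem_prod, Prod.forall, prod_apply]
  refine ⟨fun h => ⟨fun u hu => by simpa using h u 0 ⟨hu, W.zero_mem⟩,
    fun w hw => by simpa using h 0 w ⟨U.zero_mem, hw⟩⟩, ?_⟩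
  rintro ⟨h₁, h₂⟩ u w ⟨hu, hw⟩
  rw [h₁ u hu, h₂ w hw, add_zero]

lemma orthogonal_map_snd (Y : Submodule R (M × N)) :
    B₂.orthogonal (Y.map (snd R M N)) = ((B₁.prod B₂).orthogonal Y).comap (inr R M N) := by
  ext z
  simp only [mem_orthogonal_iff, Submodule.mem_comap, inr_apply, prod_apply, map_zero, zero_add]
  refine ⟨fun h x hx => h _ (Submodule.mem_map_of_mem hx), ?_⟩
  rintro h _ ⟨x, hx, rfl⟩
  exact h x hx

end Prod

lemma orthogonal_sup {R M : Type*} [CommRing R] [AddCommGroup M] [Module R M]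
    (B : BilinForm R M) (U W : Submodule R M) :
    B.orthogonal (U ⊔ W) = B.orthogonal U ⊓ B.orthogonal W :=
  le_antisymm (le_inf (orthogonal_le le_sup_left) (orthogonal_le le_sup_right))
    fun y ⟨hU, hW⟩ x hx => by
      obtain ⟨u, hu, w, hw, rfl⟩ := Submodule.mem_sup.1 hx
      rw [map_add, LinearMap.add_apply, hU u hu, hW w hw, add_zero]

lemma orthogonal_inf {K V : Type*} [Field K] [AddCommGroup V] [Module K V] [FiniteDimensional K V]
    {B : BilinForm K V} (hB : B.Nondegenerate) (hB₀ : B.IsRefl) (U W : Submodule K V) :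
    B.orthogonal (U ⊓ W) = B.orthogonal U ⊔ B.orthogonal W := by
  rw [← orthogonal_orthogonal hB hB₀ (_ ⊔ _), orthogonal_sup, orthogonal_orthogonal hB hB₀,
    orthogonal_orthogonal hB hB₀]

/-- Read `V ⊆ M × N` as a relation: the orthogonal of the image of `U` under `V` is the image of
`U^⊥` under `V^⊥`. -/
theorem orthogonal_map_snd_inf_prod_top {K M N : Type*} [Field K]
    [AddCommGroup M] [Module K M] [FiniteDimensional K M]
    [AddCommGroup N] [Module K N] [FiniteDimensional K N]
    {B₁ : BilinForm K M} {B₂ : BilinForm K N} (hs₁ : B₁.IsSymm) (hs₂ : B₂.IsSymm)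
    (h₁ : B₁.Nondegenerate) (h₂ : B₂.Nondegenerate) (V : Submodule K (M × N))
    (U : Submodule K M) :
    B₂.orthogonal ((V ⊓ U.prod ⊤).map (snd K M N))
      = ((B₁.prod B₂).orthogonal V ⊓ (B₁.orthogonal U).prod ⊤).map (snd K M N) := by
  rw [orthogonal_map_snd B₁, orthogonal_inf (h₁.prod h₂) (hs₁.prod hs₂).isRefl,
    orthogonal_prod, orthogonal_top_eq_bot h₂, Submodule.comap_inr_sup_prod_bot]

section DiracForm

variable {R M : Type*} [CommRing R] [AddCommGroup M] [Module R M]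

def diracForm (B : BilinForm R M) : BilinForm R (M × M) :=
  B.compl₁₂ (fst R M M) (snd R M M) + B.compl₁₂ (snd R M M) (fst R M M)

@[simp]
lemma diracForm_apply (B : BilinForm R M) (x y : M × M) :
    B.diracForm x y = B x.1 y.2 + B x.2 y.1 := rfl

lemma IsSymm.diracForm {B : BilinForm R M} (h : B.IsSymm) : B.diracForm.IsSymm :=
  ⟨fun x y => by rw [diracForm_apply, diracForm_apply, h.eq x.1, h.eq x.2, add_comm]⟩

lemma Nondegenerate.diracForm {B : BilinForm R M} (h : B.Nondegenerate) :
    B.diracForm.Nondegenerate :=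
  ⟨fun x hx => Prod.ext (h.1 _ fun y => by simpa using hx (0, y))
      (h.1 _ fun y => by simpa using hx (y, 0)),
    fun y hy => Prod.ext (h.2 _ fun x => by simpa using hy (0, x))
      (h.2 _ fun x => by simpa using hy (x, 0))⟩

end DiracForm

end LinearMap.BilinForm

section DotProduct

variable {R X : Type*} [CommRing R] [Fintype X]

lemma isSymm_dotProductBilin : BilinForm.IsSymm (dotProductBilin R R : BilinForm R (X → R)) :=
  ⟨dotProduct_comm⟩

lemma nondegenerate_dotProductBilin :
    BilinForm.Nondegenerate (dotProductBilin R R : BilinForm R (X → R)) :=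
  ⟨dotProduct_eq_zero,
    fun w hw => dotProduct_eq_zero w fun v => (dotProduct_comm w v).trans (hw v)⟩

end DotProduct

section Dirac

open LinearMap.BilinForm

variable {F : Type*} [Field F]

abbrev diracDot (F X : Type*) [Field F] [Fintype X] : BilinForm F ((X → F) × (X → F)) :=
  diracForm (dotProductBilin F F)

lemma isSymm_diracDot (X : Type*) [Fintype X] : (diracDot F X).IsSymm :=
  IsSymm.diracForm isSymm_dotProductBilin

lemma nondegenerate_diracDot (X : Type*) [Fintype X] : (diracDot F X).Nondegenerate :=
  Nondegenerate.diracForm nondegenerate_dotProductBilin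

lemma diracFun_eq_orthogonal {X : Type*} [Fintype X] (V : Submodule F ((X → F) × (X → F))) :
    diracFun (V : Set ((X → F) × (X → F))) = ↑((diracDot F X).orthogonal V) :=
  rfl

/-- Regroups `((a, p), (b, q))` on `(S′∪P′)∪(S″∪P″)` as `((a, b), (p, q))` on
`(S′∪S″)∪(P′∪P″)`. -/
abbrev portShuffle (F S P : Type*) [Field F] :=
  LinearEquiv.prodProdProdComm F (S → F) (P → F) (S → F) (P → F)

lemma diracM_eq_map {S P : Type*} [Fintype S] [Fintype P]
    (V : Submodule F (((S → F) × (P → F)) × ((S → F) × (P → F)))) :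
    diracM (V : Set (((S → F) × (P → F)) × ((S → F) × (P → F))))
      = ↑((((diracDot F S).prod (diracDot F P)).orthogonal
          (V.map (portShuffle F S P).toLinearMap)).map (portShuffle F S P).symm.toLinearMap) := by
  ext z
  rw [SetLike.mem_coe, Submodule.mem_map_equiv, LinearEquiv.symm_symm]
  simp only [diracM, perpM2, Set.mem_ofPred_eq, mem_orthogonal_iff, Submodule.mem_map,
    forall_exists_index, and_imp, forall_apply_eq_imp_iff₂]
  refine forall₂_congr fun x _ => ?_
  simp only [dotM, LinearEquiv.coe_coe, LinearEquiv.prodProdProdComm_apply, prod_apply,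
    diracForm_apply, dotProductBilin_apply_apply]
  rw [add_add_add_comm]
  rfl

lemma portComp_eq_map {S P : Type*}
    (V₁ : Submodule F (((S → F) × (P → F)) × ((S → F) × (P → F))))
    (V₂ : Submodule F ((S → F) × (S → F))) :
    portComp (V₁ : Set (((S → F) × (P → F)) × ((S → F) × (P → F))))
        (V₂ : Set ((S → F) × (S → F)))
      = ↑((V₁.map (portShuffle F S P).toLinearMap ⊓ V₂.prod ⊤).map
          (snd F ((S → F) × (S → F)) ((P → F) × (P → F)))) := by
  ext z
  constructor
  · rintro ⟨f₁, f₂, h₁, h₂⟩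
    exact ⟨((f₁, f₂), z), ⟨Submodule.mem_map_of_mem h₁, h₂, trivial⟩, rfl⟩
  · rintro ⟨_, ⟨⟨x, hx, rfl⟩, hx₂, -⟩, rfl⟩
    exact ⟨x.1.1, x.2.1, hx, hx₂⟩

theorem portComp_diracM_diracFun {S P : Type*} [Fintype S] [Fintype P]
    (V₁ : Submodule F (((S → F) × (P → F)) × ((S → F) × (P → F))))
    (V₂ : Submodule F ((S → F) × (S → F))) :
    portComp (diracM (V₁ : Set (((S → F) × (P → F)) × ((S → F) × (P → F)))))
        (diracFun (V₂ : Set ((S → F) × (S → F))))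
      = diracFun (portComp (V₁ : Set (((S → F) × (P → F)) × ((S → F) × (P → F))))
          (V₂ : Set ((S → F) × (S → F)))) := by
  rw [diracM_eq_map, diracFun_eq_orthogonal, portComp_eq_map, portComp_eq_map,
    diracFun_eq_orthogonal, orthogonal_map_snd_inf_prod_top (isSymm_diracDot S)
      (isSymm_diracDot P) (nondegenerate_diracDot S) (nondegenerate_diracDot P),
    (Submodule.map_symm_eq_iff _).mp rfl]

end Dirac

/-- Dirac duals compose: if `V₁,V̂₁` are Dirac duals of each other and so are
`V₂,V̂₂`, then `V₁ ↔ V₂` and `V̂₁ ↔ V̂₂` are Dirac duals of each other; in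
particular matched composition preserves the Dirac (self-Dirac-dual) property. -/
theorem stmt10 (F S P : Type*) [Field F] [Fintype S] [Fintype P] :
    (∀ (V₁ W₁ : Submodule F (((S → F) × (P → F)) × ((S → F) × (P → F))))
       (V₂ W₂ : Submodule F ((S → F) × (S → F))),
      ((W₁ : Set (((S → F) × (P → F)) × ((S → F) × (P → F))))
          = diracM (V₁ : Set (((S → F) × (P → F)) × ((S → F) × (P → F))))
        ∧ (V₁ : Set (((S → F) × (P → F)) × ((S → F) × (P → F))))
          = diracM (W₁ : Set (((S → F) × (P → F)) × ((S → F) × (P → F))))) →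
      ((W₂ : Set ((S → F) × (S → F))) = diracFun (V₂ : Set ((S → F) × (S → F)))
        ∧ (V₂ : Set ((S → F) × (S → F))) = diracFun (W₂ : Set ((S → F) × (S → F)))) →
      (portComp (W₁ : Set (((S → F) × (P → F)) × ((S → F) × (P → F))))
            (W₂ : Set ((S → F) × (S → F)))
          = diracFun (portComp (V₁ : Set (((S → F) × (P → F)) × ((S → F) × (P → F))))
              (V₂ : Set ((S → F) × (S → F))))
        ∧ portComp (V₁ : Set (((S → F) × (P → F)) × ((S → F) × (P → F))))
            (V₂ : Set ((S → F) × (S → F)))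
          = diracFun (portComp (W₁ : Set (((S → F) × (P → F)) × ((S → F) × (P → F))))
              (W₂ : Set ((S → F) × (S → F))))))
    ∧ (∀ (V₁ : Submodule F (((S → F) × (P → F)) × ((S → F) × (P → F))))
         (V₂ : Submodule F ((S → F) × (S → F))),
      diracM (V₁ : Set (((S → F) × (P → F)) × ((S → F) × (P → F))))
          = (V₁ : Set (((S → F) × (P → F)) × ((S → F) × (P → F)))) →
      diracFun (V₂ : Set ((S → F) × (S → F))) = (V₂ : Set ((S → F) × (S → F))) →
      diracFun (portComp (V₁ : Set (((S → F) × (P → F)) × ((S → F) × (P → F))))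
            (V₂ : Set ((S → F) × (S → F))))
        = portComp (V₁ : Set (((S → F) × (P → F)) × ((S → F) × (P → F))))
            (V₂ : Set ((S → F) × (S → F)))) := by
  refine ⟨fun V₁ W₁ V₂ W₂ ⟨hW₁, hV₁⟩ ⟨hW₂, hV₂⟩ => ⟨?_, ?_⟩, fun V₁ V₂ h₁ h₂ => ?_⟩
  · rw [hW₁, hW₂, portComp_diracM_diracFun]
  · rw [hV₁, hV₂, portComp_diracM_diracFun]
  · conv_rhs => rw [← h₁, ← h₂]
    exact (portComp_diracM_diracFun V₁ V₂).symm
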